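/- arXiv:2201.04847 — 4 statements merged into one kernel-verified Lean document; each statement's English description precedes it below -/
import Mathlib

section
/- For any planar rooted binary tree t with n+1 leaves, if a_i and b_i denote the number of leaves to the left and right of the i-th internal vertex respectively, then the sum of the weights a_1 b_1 + a_2 b_2 + ... + a_n b_n equals n(n+1)/2. -/
/-!
Every pair of leaves is separated at exactly one internal vertex, their lowest common ancestor,
and the vertex with `a` leaves on its left and `b` on its right separates exactly `a * b` pairs.
Hence the weights of a tree with `n + 1` leaves add up to the number of pairs of leaves,
`(n + 1).choose 2 = n * (n + 1) / 2`.
-/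

/-- Planar rooted binary trees. -/
inductive BinTree : Type
  | leaf : BinTree
  | node : BinTree → BinTree → BinTree

/-- Number of leaves of a planar rooted binary tree. -/
def BinTree.leaves : BinTree → ℕ
  | .leaf => 1
  | .node l r => l.leaves + r.leaves

/-- The list of weights `aᵢ * bᵢ` of the internal vertices of a planar rooted
binary tree, read from left to right: the `i`-th internal vertex sits between
leaves `i-1` and `i`, `aᵢ` is the number of leaves of the subtree hanging to its
left and `bᵢ` the number of leaves hanging to its right. -/
def BinTree.weights : BinTree → List ℕ
  | .leaf => []
  | .node l r => l.weights ++ [l.leaves * r.leaves] ++ r.weights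

theorem Nat.add_choose_two (a b : ℕ) :
    (a + b).choose 2 = a.choose 2 + a * b + b.choose 2 := by
  rw [Nat.add_choose_eq, Finset.Nat.sum_antidiagonal_eq_sum_range_succ_mk]
  simp only [Finset.sum_range_succ, Finset.sum_range_zero, Nat.reduceSub, Nat.choose_zero_right,
    Nat.choose_one_right]
  ring

theorem BinTree.weights_sum_eq_choose_two (t : BinTree) :
    t.weights.sum = t.leaves.choose 2 := by
  induction t with
  | leaf => rfl
  | node l r ihl ihr =>
    simp only [BinTree.weights, BinTree.leaves, List.sum_append, List.sum_singleton, ihl, ihr,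
      Nat.add_choose_two]

/-- Loday's lemma: for a planar rooted binary tree with `n+1` leaves, the sum of
the weights of its `n` internal vertices is `n(n+1)/2`. -/
theorem weights_sum (n : ℕ) (t : BinTree) (h : t.leaves = n + 1) :
    t.weights.sum = n * (n + 1) / 2 := by
  rw [t.weights_sum_eq_choose_two, h, Nat.choose_two_right, Nat.add_sub_cancel, mul_comm]
end

section
/- The unique complete bracketing of the word x_1 x_2 ... x_{n+1} all of whose 1-bracketing coarsenings enclose the last letter x_{n+1} is the right-to-left bracketing x_1(x_2(...(x_{n-1}(x_n x_{n+1}))...)). That is, for every other complete bracketing, some 1-bracketing obtained by deleting all but one pair of its parentheses does not enclose x_{n+1}. -/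
/-- Two parenthesis pairs, encoded as intervals `(a, b)` of letter positions,
are compatible if they are disjoint or nested. -/
def Compat (p q : ℕ × ℕ) : Prop :=
  p.2 < q.1 ∨ q.2 < p.1 ∨ (p.1 ≤ q.1 ∧ q.2 ≤ p.2) ∨ (q.1 ≤ p.1 ∧ p.2 ≤ q.2)

/-- A (possibly partial) bracketing of a word with `n` letters: a set of
parenthesis pairs, each encoded as an interval `(a, b)` with `1 ≤ a < b ≤ n`
enclosing the consecutive block `x_a ... x_b` (so of length at least `2`), the
trivial pair `(1, n)` enclosing the whole word being excluded, such that any two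
pairs are nested or disjoint. -/
def IsBracketing (n : ℕ) (S : Finset (ℕ × ℕ)) : Prop :=
  (∀ p ∈ S, 1 ≤ p.1 ∧ p.1 < p.2 ∧ p.2 ≤ n ∧ ¬(p.1 = 1 ∧ p.2 = n)) ∧
  ∀ p ∈ S, ∀ q ∈ S, Compat p q

/-- The bracketings of a word with `n` letters. -/
def Bracketing (n : ℕ) : Type := {S : Finset (ℕ × ℕ) // IsBracketing n S}

/-!
A pair enclosing `x_{n+1}` is `(k, n+1)` with `2 ≤ k ≤ n`, since `(1, n+1)` is the trivial pair.
There are only `n - 1` such pairs, so a complete bracketing, which has `n - 1` pairs, all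
enclosing `x_{n+1}` must consist of all of them.
-/

def rightComb (n : ℕ) : Finset (ℕ × ℕ) :=
  (Finset.Icc 2 n).image (fun k => (k, n + 1))

theorem mem_rightComb_iff {n : ℕ} {p : ℕ × ℕ} :
    p ∈ rightComb n ↔ 2 ≤ p.1 ∧ p.1 ≤ n ∧ p.2 = n + 1 := by
  obtain ⟨a, b⟩ := p
  simp only [rightComb, Finset.mem_image, Finset.mem_Icc, Prod.mk.injEq]
  constructor
  · rintro ⟨k, ⟨hk2, hkn⟩, rfl, rfl⟩
    exact ⟨hk2, hkn, rfl⟩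
  · rintro ⟨ha2, han, rfl⟩
    exact ⟨a, ⟨ha2, han⟩, rfl, rfl⟩

theorem card_rightComb (n : ℕ) : (rightComb n).card = n - 1 := by
  rw [rightComb, Finset.card_image_of_injective _ fun a b hab => (Prod.mk.inj hab).1,
    Nat.card_Icc]
  omega

theorem IsBracketing.mem_rightComb {n : ℕ} {S : Finset (ℕ × ℕ)} (hS : IsBracketing (n + 1) S)
    {p : ℕ × ℕ} (hp : p ∈ S) (hp_last : p.2 = n + 1) : p ∈ rightComb n := by
  obtain ⟨h1, hlt, -, hnontriv⟩ := hS.1 p hp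
  rw [mem_rightComb_iff]
  omega

theorem rightComb_unique_general (n : ℕ) (B : Bracketing (n + 1))
    (hB : B.val.card = n - 1) :
    (∀ p ∈ B.val, p.2 = n + 1) ↔
      B.val = (Finset.Icc 2 n).image (fun k => (k, n + 1)) := by
  change _ ↔ B.val = rightComb n
  constructor
  · intro hlast
    refine Finset.eq_of_subset_of_card_le (fun p hp => B.property.mem_rightComb hp (hlast p hp)) ?_
    rw [hB, card_rightComb]
  · rintro hB_eq p hp
    rw [hB_eq] at hp
    exact (mem_rightComb_iff.mp hp).2.2

/-- The unique complete bracketing of `x_1 ... x_{n+1}` all of whose one-bracketing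
coarsenings enclose the last letter `x_{n+1}` (i.e. every parenthesis pair of which
encloses `x_{n+1}`) is the right-to-left bracketing
`x_1(x_2(...(x_{n-1}(x_n x_{n+1}))...))`, whose pairs are `(k, n+1)` for `2 ≤ k ≤ n`. -/
theorem rightComb_unique (n : ℕ) (hn : 1 ≤ n) (B : Bracketing (n + 1))
    (hB : B.val.card = n - 1) :
    (∀ p ∈ B.val, p.2 = n + 1) ↔
      B.val = (Finset.Icc 2 n).image (fun k => (k, n + 1)) :=
  rightComb_unique_general n B hB
end

section
/- There is an order-preserving bijection between the poset of painted trees with n leaves (ordered by refinement: t ≤ t' if t' is obtained from t by collapsing internal edges) and the poset 𝔍_n of formal expressions built from a_1,...,a_n via f, bracketing, and the painted-product symbol '·', with the ordering generated by: adding brackets in domain or codomain, replacing '·' by ')f(', and removing consecutive '·'s by adding an enclosing bracket pair. -/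
/-- Planar rooted trees (associations of a word: each internal node is a
bracketed product of its children). -/
inductive WT : Type
  | lf : WT
  | nd : List WT → WT

/-- Number of leaves (letters). -/
def WT.leaves : WT → ℕ
  | .lf => 1
  | .nd l => (l.attach.map (fun x => WT.leaves x.1)).sum
decreasing_by
  have := List.sizeOf_lt_of_mem x.2
  simp only [WT.nd.sizeOf_spec]
  omega

/-- A valid association: every internal node has at least two children
(no redundant brackets). -/
def WT.valid : WT → Prop
  | .lf => True
  | .nd l => 2 ≤ l.length ∧ ∀ t ∈ l, t.valid
decreasing_by
  have := List.sizeOf_lt_of_mem ‹t ∈ l›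
  simp only [WT.nd.sizeOf_spec]
  omega

/-- `WAdd t t'` : the association `t` is obtained from `t'` by adding one
(non-redundant) pair of brackets around at least two consecutive factors;
equivalently, `t'` is obtained from `t` by collapsing one internal edge. -/
inductive WAdd : WT → WT → Prop
  | here (l₁ m l₂ : List WT) (hm : 2 ≤ m.length) (h : 1 ≤ l₁.length + l₂.length) :
      WAdd (.nd (l₁ ++ [.nd m] ++ l₂)) (.nd (l₁ ++ m ++ l₂))
  | under (l₁ l₂ : List WT) {a b : WT} (h : WAdd a b) :
      WAdd (.nd (l₁ ++ [a] ++ l₂)) (.nd (l₁ ++ [b] ++ l₂))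

/-- A painted tree: the painted region starts at the root; `nd` is an entirely
painted node, while `tr` is a transition node (painted root-side edge, unpainted
trees above it). -/
inductive PT : Type
  | tr : List WT → PT
  | nd : List PT → PT

/-- Number of leaves of a painted tree. -/
def PT.leaves : PT → ℕ
  | .tr args => (args.map WT.leaves).sum
  | .nd l => (l.attach.map (fun x => PT.leaves x.1)).sum
decreasing_by
  have := List.sizeOf_lt_of_mem x.2
  simp only [PT.nd.sizeOf_spec]
  omega

/-- Validity: transition nodes have at least one unpainted tree above; painted
nodes have at least two children; all unpainted parts are valid. -/
def PT.valid : PT → Prop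
  | .tr args => args ≠ [] ∧ ∀ t ∈ args, t.valid
  | .nd l => 2 ≤ l.length ∧ ∀ t ∈ l, PT.valid t
decreasing_by
  have := List.sizeOf_lt_of_mem ‹t ∈ l›
  simp only [PT.nd.sizeOf_spec]
  omega

/-- `Collapse t t'` : the painted tree `t'` is obtained from `t` by collapsing
one internal edge (or one full bunch of painted edges below a painted node whose
children are all transition nodes). -/
inductive Collapse : PT → PT → Prop
  | painted (l₁ m l₂ : List PT) (hm : 2 ≤ m.length) :
      Collapse (.nd (l₁ ++ [.nd m] ++ l₂)) (.nd (l₁ ++ m ++ l₂))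
  | unpaintedRoot (u m v : List WT) (hm : 2 ≤ m.length) :
      Collapse (.tr (u ++ [.nd m] ++ v)) (.tr (u ++ m ++ v))
  | insideW (u v : List WT) {a b : WT} (h : WAdd a b) :
      Collapse (.tr (u ++ [a] ++ v)) (.tr (u ++ [b] ++ v))
  | bunch (ls : List (List WT)) (h : 2 ≤ ls.length) :
      Collapse (.nd (ls.map PT.tr)) (.tr ls.flatten)
  | under (l₁ l₂ : List PT) {a b : PT} (h : Collapse a b) :
      Collapse (.nd (l₁ ++ [a] ++ l₂)) (.nd (l₁ ++ [b] ++ l₂))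

/-- The refinement order on painted trees: `t ≤ t'` iff `t'` is obtained from
`t` by collapsing internal edges. -/
def PT.Refines (t t' : PT) : Prop := Relation.ReflTransGen Collapse t t'

/-- Formal expressions of the poset `𝔍_n`: `f bs` is `f(X₁· ... ·X_k)` (type I
when `k = 1`, type II otherwise), applying `f` to blocks separated by the
painted-product symbol `·`; `mul l` is a bracketed product of such expressions
in the codomain (type III). -/
inductive JX : Type
  | f : List WT → JX
  | mul : List JX → JX

/-- Number of letters of an expression. -/
def JX.leaves : JX → ℕ
  | .f bs => (bs.map WT.leaves).sum
  | .mul l => (l.attach.map (fun x => JX.leaves x.1)).sum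
decreasing_by
  have := List.sizeOf_lt_of_mem x.2
  simp only [JX.mul.sizeOf_spec]
  omega

/-- Validity of expressions. -/
def JX.valid : JX → Prop
  | .f bs => bs ≠ [] ∧ ∀ t ∈ bs, t.valid
  | .mul l => 2 ≤ l.length ∧ ∀ t ∈ l, JX.valid t
decreasing_by
  have := List.sizeOf_lt_of_mem ‹t ∈ l›
  simp only [JX.mul.sizeOf_spec]
  omega

/-- `JOp P' P` : `P` is obtained from `P'` by one of the three generating
moves of `𝔍_n` (so `P ≺ P'`): adding a bracket pair in the domain, adding a
bracket pair in the codomain, replacing `·` by `)f(`, or removing consecutive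
`·`s by adding an enclosing bracket pair. -/
inductive JOp : JX → JX → Prop
  | domBracket (u v : List WT) {t t' : WT} (h : WAdd t' t) :
      JOp (.f (u ++ [t] ++ v)) (.f (u ++ [t'] ++ v))
  | codBracket (l₁ m l₂ : List JX) (hm : 2 ≤ m.length)
      (h : 1 ≤ l₁.length + l₂.length) :
      JOp (.mul (l₁ ++ m ++ l₂)) (.mul (l₁ ++ [.mul m] ++ l₂))
  | dotToF (ls : List (List WT)) (h : 2 ≤ ls.length) :
      JOp (.f ls.flatten) (.mul (ls.map JX.f))
  | remDots (u m v : List WT) (hm : 2 ≤ m.length) :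
      JOp (.f (u ++ m ++ v)) (.f (u ++ [.nd m] ++ v))
  | under (l₁ l₂ : List JX) {a b : JX} (h : JOp a b) :
      JOp (.mul (l₁ ++ [a] ++ l₂)) (.mul (l₁ ++ [b] ++ l₂))

/-- The order on `𝔍_n`: `P ≤ P'` iff `P` is obtained from `P'` by a sequence of
the generating moves. -/
def JX.Le (P P' : JX) : Prop := Relation.ReflTransGen JOp P' P


/-! ### Auxiliary: the structural isomorphism between `PT` and `JX` -/

def phi : PT → JX
  | .tr l => .f l
  | .nd l => .mul (l.attach.map fun x => phi x.1)
decreasing_by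
  have := List.sizeOf_lt_of_mem x.2
  simp only [PT.nd.sizeOf_spec]
  omega

def psi : JX → PT
  | .f l => .tr l
  | .mul l => .nd (l.attach.map fun x => psi x.1)
decreasing_by
  have := List.sizeOf_lt_of_mem x.2
  simp only [JX.mul.sizeOf_spec]
  omega

@[simp] lemma phi_tr (l : List WT) : phi (.tr l) = .f l := by simp [phi]

@[simp] lemma phi_nd (l : List PT) : phi (.nd l) = .mul (l.map phi) := by
  rw [phi]
  congr 1
  simp [List.attach_map_val]

@[simp] lemma psi_f (l : List WT) : psi (.f l) = .tr l := by simp [psi]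

@[simp] lemma psi_mul (l : List JX) : psi (.mul l) = .nd (l.map psi) := by
  rw [psi]
  congr 1
  simp [List.attach_map_val]

@[simp] lemma PT.leaves_tr (l : List WT) : PT.leaves (.tr l) = (l.map WT.leaves).sum := by
  simp [PT.leaves]

@[simp] lemma PT.leaves_nd (l : List PT) : PT.leaves (.nd l) = (l.map PT.leaves).sum := by
  rw [PT.leaves]; congr 1; simp [List.attach_map_val]

@[simp] lemma JX.leaves_f (l : List WT) : JX.leaves (.f l) = (l.map WT.leaves).sum := by
  simp [JX.leaves]

@[simp] lemma JX.leaves_mul (l : List JX) : JX.leaves (.mul l) = (l.map JX.leaves).sum := by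
  rw [JX.leaves]; congr 1; simp [List.attach_map_val]

lemma PT.valid_tr (l : List WT) : PT.valid (.tr l) ↔ l ≠ [] ∧ ∀ t ∈ l, t.valid := by
  rw [PT.valid]

lemma PT.valid_nd (l : List PT) : PT.valid (.nd l) ↔ 2 ≤ l.length ∧ ∀ t ∈ l, t.valid := by
  rw [PT.valid]

lemma JX.valid_f (l : List WT) : JX.valid (.f l) ↔ l ≠ [] ∧ ∀ t ∈ l, t.valid := by
  rw [JX.valid]

lemma JX.valid_mul (l : List JX) : JX.valid (.mul l) ↔ 2 ≤ l.length ∧ ∀ t ∈ l, t.valid := by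
  rw [JX.valid]

lemma WT.valid_nd (l : List WT) : WT.valid (.nd l) ↔ 2 ≤ l.length ∧ ∀ t ∈ l, t.valid := by
  rw [WT.valid]

lemma psi_phi : ∀ t : PT, psi (phi t) = t
  | .tr l => by simp
  | .nd l => by
      rw [phi_nd, psi_mul, List.map_map]
      congr 1
      conv_rhs => rw [← List.map_id l]
      exact List.map_congr_left fun x _ => psi_phi x
decreasing_by
  have := List.sizeOf_lt_of_mem ‹x ∈ l›
  simp only [PT.nd.sizeOf_spec]
  omega

lemma phi_psi : ∀ x : JX, phi (psi x) = x
  | .f l => by simp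
  | .mul l => by
      rw [psi_mul, phi_nd, List.map_map]
      congr 1
      conv_rhs => rw [← List.map_id l]
      exact List.map_congr_left fun x _ => phi_psi x
decreasing_by
  have := List.sizeOf_lt_of_mem ‹x ∈ l›
  simp only [JX.mul.sizeOf_spec]
  omega

lemma phi_leaves : ∀ t : PT, (phi t).leaves = t.leaves
  | .tr l => by simp
  | .nd l => by
      rw [phi_nd, JX.leaves_mul, PT.leaves_nd, List.map_map]
      congr 1
      exact List.map_congr_left fun x _ => phi_leaves x
decreasing_by
  have := List.sizeOf_lt_of_mem ‹x ∈ l›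
  simp only [PT.nd.sizeOf_spec]
  omega

lemma phi_valid : ∀ t : PT, (phi t).valid ↔ t.valid
  | .tr l => by simp [PT.valid_tr, JX.valid_f]
  | .nd l => by
      rw [phi_nd, JX.valid_mul, PT.valid_nd, List.length_map]
      refine and_congr Iff.rfl ?_
      constructor
      · intro h t ht
        exact (phi_valid t).mp (h _ (List.mem_map_of_mem (f := phi) ht))
      · intro h t ht
        obtain ⟨s, hs, rfl⟩ := List.mem_map.mp ht
        exact (phi_valid s).mpr (h s hs)
decreasing_by
  all_goals
    first
    | (have := List.sizeOf_lt_of_mem ‹t ∈ l›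
       simp only [PT.nd.sizeOf_spec]; omega)
    | (have := List.sizeOf_lt_of_mem ‹s ∈ l›
       simp only [PT.nd.sizeOf_spec]; omega)

/-! ### Validity is preserved by the moves -/

lemma wadd_valid {a b : WT} (h : WAdd a b) (hv : a.valid) : b.valid := by
  induction h with
  | here l₁ m l₂ hm h =>
      rw [WT.valid_nd] at hv ⊢
      obtain ⟨_, hall⟩ := hv
      have hmv : WT.valid (.nd m) := hall _ (by simp)
      rw [WT.valid_nd] at hmv
      constructor
      · simp only [List.length_append, List.length_cons]
        omega
      · intro t ht
        simp only [List.append_assoc, List.mem_append] at ht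
        rcases ht with h1 | h2 | h3
        · exact hall t (by simp [h1])
        · exact hmv.2 t h2
        · exact hall t (by simp [h3])
  | under l₁ l₂ h ih =>
      rw [WT.valid_nd] at hv ⊢
      obtain ⟨hlen, hall⟩ := hv
      constructor
      · simpa using hlen
      · intro t ht
        simp only [List.append_assoc, List.mem_append, List.mem_singleton] at ht
        rcases ht with h1 | h2 | h3
        · exact hall t (by simp [h1])
        · exact h2 ▸ ih (hall _ (by simp))
        · exact hall t (by simp [h3])

lemma collapse_valid {a b : PT} (h : Collapse a b) (hv : a.valid) : b.valid := by
  induction h with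
  | painted l₁ m l₂ hm =>
      rw [PT.valid_nd] at hv ⊢
      obtain ⟨_, hall⟩ := hv
      have hmv : PT.valid (.nd m) := hall _ (by simp)
      rw [PT.valid_nd] at hmv
      refine ⟨by simp only [List.length_append]; omega, ?_⟩
      intro t ht
      simp only [List.append_assoc, List.mem_append] at ht
      rcases ht with h1 | h2 | h3
      · exact hall t (by simp [h1])
      · exact hmv.2 t h2
      · exact hall t (by simp [h3])
  | unpaintedRoot u m v hm =>
      rw [PT.valid_tr] at hv ⊢
      obtain ⟨_, hall⟩ := hv
      have hmv : WT.valid (.nd m) := hall _ (by simp)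
      rw [WT.valid_nd] at hmv
      refine ⟨?_, ?_⟩
      · intro hfl
        apply_fun List.length at hfl
        simp only [List.length_append, List.length_nil] at hfl
        omega
      intro t ht
      simp only [List.append_assoc, List.mem_append] at ht
      rcases ht with h1 | h2 | h3
      · exact hall t (by simp [h1])
      · exact hmv.2 t h2
      · exact hall t (by simp [h3])
  | insideW u v h =>
      rw [PT.valid_tr] at hv ⊢
      obtain ⟨hne, hall⟩ := hv
      refine ⟨by simp, ?_⟩
      intro t ht
      simp only [List.append_assoc, List.mem_append, List.mem_singleton] at ht
      rcases ht with h1 | h2 | h3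
      · exact hall t (by simp [h1])
      · exact h2 ▸ wadd_valid h (hall _ (by simp))
      · exact hall t (by simp [h3])
  | bunch ls h =>
      rw [PT.valid_nd] at hv
      rw [PT.valid_tr]
      obtain ⟨hlen, hall⟩ := hv
      constructor
      · intro hfl
        obtain ⟨l0, hl0⟩ : ∃ l0, l0 ∈ ls := by
          cases ls with
          | nil => simp at h
          | cons a t => exact ⟨a, by simp⟩
        have : PT.valid (.tr l0) := hall _ (List.mem_map_of_mem hl0)
        rw [PT.valid_tr] at this
        exact this.1 (List.flatten_eq_nil_iff.mp hfl l0 hl0)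
      · intro t ht
        obtain ⟨l0, hl0, htl0⟩ := List.mem_flatten.mp ht
        have : PT.valid (.tr l0) := hall _ (List.mem_map_of_mem hl0)
        rw [PT.valid_tr] at this
        exact this.2 t htl0
  | under l₁ l₂ h ih =>
      rw [PT.valid_nd] at hv ⊢
      obtain ⟨hlen, hall⟩ := hv
      refine ⟨by simpa using hlen, ?_⟩
      intro t ht
      simp only [List.append_assoc, List.mem_append, List.mem_singleton] at ht
      rcases ht with h1 | h2 | h3
      · exact hall t (by simp [h1])
      · exact h2 ▸ ih (hall _ (by simp))
      · exact hall t (by simp [h3])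

/-! ### The correspondence of covering moves -/

lemma jop_to_collapse {x y : JX} (h : JOp x y) : Collapse (psi y) (psi x) := by
  induction h with
  | domBracket u v h =>
      simp only [psi_f]
      exact Collapse.insideW u v h
  | codBracket l₁ m l₂ hm h =>
      simp only [psi_mul, List.map_append, List.map_cons, List.map_nil]
      exact Collapse.painted (l₁.map psi) (m.map psi) (l₂.map psi) (by simpa using hm)
  | dotToF ls h =>
      simp only [psi_f, psi_mul, List.map_map]
      have : (ls.map (psi ∘ JX.f)) = ls.map PT.tr := by
        apply List.map_congr_left; intro a _; simp [Function.comp]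
      rw [this]
      exact Collapse.bunch ls h
  | remDots u m v hm =>
      simp only [psi_f]
      exact Collapse.unpaintedRoot u m v hm
  | under l₁ l₂ h ih =>
      simp only [psi_mul, List.map_append, List.map_cons, List.map_nil]
      exact Collapse.under (l₁.map psi) (l₂.map psi) ih

lemma collapse_to_jop {a b : PT} (h : Collapse a b) (hv : a.valid) : JOp (phi b) (phi a) := by
  induction h with
  | painted l₁ m l₂ hm =>
      rw [PT.valid_nd] at hv
      simp only [phi_nd, List.map_append, List.map_cons, List.map_nil]
      refine JOp.codBracket (l₁.map phi) (m.map phi) (l₂.map phi) (by simpa using hm) ?_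
      have := hv.1
      simp only [List.length_append, List.length_cons, List.length_nil, List.length_map] at this ⊢
      omega
  | unpaintedRoot u m v hm =>
      simp only [phi_tr]
      exact JOp.remDots u m v hm
  | insideW u v h =>
      simp only [phi_tr]
      exact JOp.domBracket u v h
  | bunch ls h =>
      simp only [phi_tr, phi_nd, List.map_map]
      have : (ls.map (phi ∘ PT.tr)) = ls.map JX.f := by
        apply List.map_congr_left; intro a _; simp [Function.comp]
      rw [this]
      exact JOp.dotToF ls h
  | under l₁ l₂ h ih =>
      rw [PT.valid_nd] at hv
      simp only [phi_nd, List.map_append, List.map_cons, List.map_nil]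
      exact JOp.under (l₁.map phi) (l₂.map phi) (ih (hv.2 _ (by simp)))

lemma refines_to_le {t t' : PT} (h : Relation.ReflTransGen Collapse t t') (hv : t.valid) :
    Relation.ReflTransGen JOp (phi t') (phi t) := by
  induction h using Relation.ReflTransGen.head_induction_on with
  | refl => exact Relation.ReflTransGen.refl
  | head step rest ih =>
      exact Relation.ReflTransGen.tail (ih (collapse_valid step hv)) (collapse_to_jop step hv)

lemma le_to_refines {x y : JX} (h : Relation.ReflTransGen JOp x y) :
    Relation.ReflTransGen Collapse (psi y) (psi x) := by
  induction h using Relation.ReflTransGen.head_induction_on with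
  | refl => exact Relation.ReflTransGen.refl
  | head step rest ih =>
      exact Relation.ReflTransGen.tail ih (jop_to_collapse step)

/-- Forcey's painted-tree poset of the multiplihedron is isomorphic to the poset
`𝔍_n` of formal expressions: there is a bijection `Φ` between painted trees with
`n` leaves and expressions in `a_1, ..., a_n` which preserves and reflects the
respective orders. -/
theorem paintedTrees_orderIso_Jn (n : ℕ) :
    ∃ Φ : {t : PT // t.valid ∧ t.leaves = n} ≃ {x : JX // x.valid ∧ x.leaves = n},
      ∀ t t' : {t : PT // t.valid ∧ t.leaves = n},
        PT.Refines t.1 t'.1 ↔ JX.Le (Φ t).1 (Φ t').1 := by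
  refine ⟨⟨fun t => ⟨phi t.1, (phi_valid t.1).mpr t.2.1, by rw [phi_leaves]; exact t.2.2⟩,
    fun x => ⟨psi x.1, ?_, ?_⟩, ?_, ?_⟩, ?_⟩
  · have := (phi_valid (psi x.1))
    rw [phi_psi] at this
    exact this.mp x.2.1
  · have := phi_leaves (psi x.1)
    rw [phi_psi] at this
    rw [← this]
    exact x.2.2
  · intro t; ext : 1; exact psi_phi t.1
  · intro x; ext : 1; exact phi_psi x.1
  · intro t t'
    constructor
    · intro h
      exact refines_to_le h t.2.1
    · intro h
      simp only [Equiv.coe_fn_mk] at h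
      have := le_to_refines h
      rwa [psi_phi, psi_phi] at this
end

section
/- In the face poset of the associahedron K_{n+1}, the subposet of facets not containing the letter x_{n+1} in a parenthesis pair (i.e., facets K_p ×_r K_q with p+q = n+2 and 1 ≤ r ≤ p-1, together with K_2 ×_1 K_n) is isomorphic to the enlarged complex \widehat{K}_n via appending the letter x_{n+1}: the 1-bracketing x_1...(x_r...x_{r+q-1})...x_n x_{n+1} corresponds to the enlarged cell K_{p+1} ×_r K_q, and (x_1...x_n)x_{n+1} corresponds to the original K_n. -/
/-- The facets of `K_{n+1}` none of whose parentheses enclose the last letter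
`x_{n+1}`: the `1`-bracketings `{(a, b)}` of `x_1 ... x_{n+1}` with `b ≤ n`
(this includes `(x_1...x_n)x_{n+1}`, i.e. `K_2 ×_1 K_n`, as `(a,b) = (1,n)`). -/
def FacetNotLast (n : ℕ) : Type :=
  {S : Bracketing (n + 1) // ∃ a b, S.val = {(a, b)} ∧ b ≤ n}

/-- The cells of the enlarged complex `\widehat{K}_n`: `K_n` itself (`none`)
together with one enlarged cell `K_{p+1} ×_r K_q` for each facet `K_p ×_r K_q`
of `K_n`, i.e. for each nontrivial interval `(r, r + q - 1)` in a word of `n`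
letters (`some` of the interval data). -/
def HhatCell (n : ℕ) : Type :=
  Option {x : ℕ × ℕ // 1 ≤ x.1 ∧ x.1 < x.2 ∧ x.2 ≤ n ∧ ¬(x.1 = 1 ∧ x.2 = n)}

/-- The parenthesis pair of a facet not enclosing the last letter. -/
noncomputable def toPair {n : ℕ} (S : FacetNotLast n) : ℕ × ℕ :=
  (S.property.choose, S.property.choose_spec.choose)

lemma toPair_spec {n : ℕ} (S : FacetNotLast n) :
    S.val.val = {toPair S} ∧ (toPair S).2 ≤ n :=
  S.property.choose_spec.choose_spec

lemma toPair_eq {n : ℕ} (S : FacetNotLast n) {a b : ℕ}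
    (h : S.val.val = {(a, b)}) : toPair S = (a, b) := by
  have h1 := (toPair_spec S).1
  rw [h] at h1
  exact (Finset.singleton_inj.mp h1.symm)

lemma toPair_bounds {n : ℕ} (S : FacetNotLast n) :
    1 ≤ (toPair S).1 ∧ (toPair S).1 < (toPair S).2 ∧ (toPair S).2 ≤ n := by
  have h1 := (toPair_spec S).1
  have h2 := (toPair_spec S).2
  have hb := S.val.property.1 (toPair S) (by rw [h1]; exact Finset.mem_singleton_self _)
  exact ⟨hb.1, hb.2.1, h2⟩

/-- Build a facet from a pair with `1 ≤ a < b ≤ n`. -/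
def mkFacet {n : ℕ} (a b : ℕ) (h : 1 ≤ a ∧ a < b ∧ b ≤ n) : FacetNotLast n :=
  ⟨⟨{(a, b)}, by
    constructor
    · intro p hp
      rw [Finset.mem_singleton] at hp
      subst hp
      exact ⟨h.1, h.2.1, le_trans h.2.2 (Nat.le_succ n), by
        rintro ⟨-, h2⟩; omega⟩
    · intro p hp q hq
      rw [Finset.mem_singleton] at hp hq
      subst hp; subst hq
      exact Or.inr (Or.inr (Or.inl ⟨le_refl _, le_refl _⟩))⟩,
   ⟨a, b, rfl, h.2.2⟩⟩

lemma mkFacet_val {n : ℕ} (a b : ℕ) (h : 1 ≤ a ∧ a < b ∧ b ≤ n) :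
    (mkFacet a b h).val.val = {(a, b)} := rfl

/-- Appending the letter `x_{n+1}` identifies the facets of `K_{n+1}` not
enclosing `x_{n+1}` with the cells of the enlarged complex `\widehat{K}_n`: the
`1`-bracketing `x_1...(x_r...x_{r+q-1})...x_n x_{n+1}` corresponds to the
enlarged cell `K_{p+1} ×_r K_q`, and `(x_1...x_n)x_{n+1}` corresponds to the
original `K_n`. -/
theorem facets_equiv_enlarged_cells (n : ℕ) (hn : 2 ≤ n) :
    ∃ e : FacetNotLast n ≃ HhatCell n,
      ∀ (S : FacetNotLast n) (a b : ℕ), S.val.val = {(a, b)} →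
        (e S = none ↔ (a, b) = (1, n)) ∧
        ∀ x, e S = some x → x.val = (a, b) := by
  classical
  unfold HhatCell
  refine ⟨⟨fun S =>
      if h : toPair S = (1, n) then none
      else some ⟨toPair S, (toPair_bounds S).1, (toPair_bounds S).2.1,
        (toPair_bounds S).2.2, fun hc => h (Prod.ext hc.1 hc.2)⟩,
    fun x => match x with
      | none => mkFacet 1 n ⟨le_refl 1, by omega, le_refl n⟩
      | some ⟨(a, b), hx⟩ => mkFacet a b ⟨hx.1, hx.2.1, hx.2.2.1⟩,
    ?_, ?_⟩, ?_⟩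
  · intro S
    by_cases h : toPair S = (1, n)
    · simp only [h, dif_pos]
      apply Subtype.ext; apply Subtype.ext
      rw [mkFacet_val, (toPair_spec S).1, h]
    · simp only [h, dif_neg, not_false_iff]
      apply Subtype.ext; apply Subtype.ext
      rw [mkFacet_val, (toPair_spec S).1]
  · intro x
    match x with
    | none =>
      have : toPair (mkFacet 1 n ⟨le_refl 1, by omega, le_refl n⟩) = (1, n) :=
        toPair_eq _ rfl
      simp only [this, dif_pos]
    | some ⟨(a, b), hx⟩ =>
      have ht : toPair (mkFacet a b ⟨hx.1, hx.2.1, hx.2.2.1⟩) = (a, b) :=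
        toPair_eq _ rfl
      have hne : toPair (mkFacet a b ⟨hx.1, hx.2.1, hx.2.2.1⟩) ≠ (1, n) := by
        rw [ht]; intro hc
        exact hx.2.2.2 ⟨congrArg Prod.fst hc, congrArg Prod.snd hc⟩
      simp only [hne, dif_neg, not_false_iff]
      congr 1
      exact Subtype.ext ht
  · intro S a b hS
    have ht := toPair_eq S hS
    constructor
    · constructor
      · intro he
        by_contra hc
        rw [show (⟨_, _, _, _⟩ : FacetNotLast n ≃
            Option {x : ℕ × ℕ // 1 ≤ x.1 ∧ x.1 < x.2 ∧ x.2 ≤ n ∧ ¬(x.1 = 1 ∧ x.2 = n)}) S =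
          if h : toPair S = (1, n) then none
          else some ⟨toPair S, (toPair_bounds S).1, (toPair_bounds S).2.1,
            (toPair_bounds S).2.2, fun hc => h (Prod.ext hc.1 hc.2)⟩ from rfl] at he
        rw [dif_neg (by rw [ht]; exact hc)] at he
        exact Option.some_ne_none _ he
      · intro hab
        show (if h : toPair S = (1, n) then none else _) = none
        rw [dif_pos (by rw [ht]; exact hab)]
    · intro x hx
      by_cases h : toPair S = (1, n)
      · exfalso
        have : (if h : toPair S = (1, n) then (none : HhatCell n) else _) = some x := hx
        rw [dif_pos h] at this
        exact Option.some_ne_none x this.symm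
      · have : (if h' : toPair S = (1, n) then (none : HhatCell n)
          else some ⟨toPair S, (toPair_bounds S).1, (toPair_bounds S).2.1,
            (toPair_bounds S).2.2, fun hc => h' (Prod.ext hc.1 hc.2)⟩) = some x := hx
        rw [dif_neg h] at this
        have := Option.some_injective _ this
        rw [← this, ← ht]
end
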